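/- arXiv:2211.05513 — 2 statements merged into one kernel-verified Lean document; each statement's English description precedes it below -/
import Mathlib

section
/- Fix R ∈ (0,1), an integer d ≥ 1, and any sequence (r_m)_{m≥1} of nonnegative integers with lim_{m→∞} C(m, ≤ r_m)/2^m = R. For each m, let L_m denote the maximum dimension of an F₂-linear subspace of RM(m, r_m) all of whose elements satisfy the (d,∞)-RLL constraint under the lexicographic coordinate ordering. Then limsup_{m→∞} L_m/2^m ≤ R/(d+1). -/
/-- The `m`-bit binary representation (MSB first) of the coordinate index `s`,
as an evaluation point in `F₂^m` (lexicographic coordinate ordering). -/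
def bitRepr (m : ℕ) (s : ℕ) : Fin m → ZMod 2 :=
  fun j => if Nat.testBit s (m - 1 - (j : ℕ)) then 1 else 0

/-- Evaluation of an `m`-variate polynomial over `F₂` at all points of `F₂^m`,
listed in lexicographic order, as a linear map. -/
noncomputable def evalRM (m : ℕ) :
    MvPolynomial (Fin m) (ZMod 2) →ₗ[ZMod 2] (Fin (2 ^ m) → ZMod 2) :=
  LinearMap.pi fun s => (MvPolynomial.aeval (bitRepr m (s : ℕ))).toLinearMap

/-- The Reed-Muller code RM(m,r): evaluation vectors of polynomials of total degree ≤ r. -/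
noncomputable def RM (m r : ℕ) : Submodule (ZMod 2) (Fin (2 ^ m) → ZMod 2) :=
  (MvPolynomial.restrictTotalDegree (Fin m) (ZMod 2) r).map (evalRM m)

/-- A word `w` satisfies the `(d,∞)`-RLL constraint: any two 1s are separated by at least d 0s. -/
def RLL (d : ℕ) {n : ℕ} (w : Fin n → ZMod 2) : Prop :=
  ∀ i j : Fin n, w i = 1 → (i : ℕ) < (j : ℕ) → (j : ℕ) ≤ (i : ℕ) + d → w j = 0

/-!
Splitting the coordinates by the first variable gives the Plotkin decomposition of RM(n + 1, r):
restricting a subcode `D` to the half `x₀ = 0` lands in RM(n, r), and on the kernel of that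
restriction the sum of the two halves is injective with values in RM(n, r - 1) (zero if `r = 0`);
both images are again RLL. Iterating `m - t` times leaves words of length `2 ^ t`, where an RLL
subspace injects into its sums over runs of `d + 1` consecutive coordinates (such a run carries
at most one `1`). This gives `(d + 1) L_m ≤ (2 ^ t + d) C(m - t, ≤ r_m)`. Since
`C(n, k) / 2 ^ n ≤ 1 / √(n + 1)`, shifting `m` by `t` does not change the limit `R` of
`C(m, ≤ r_m) / 2 ^ m`, so `limsup L_m / 2 ^ m ≤ (1 + d 2⁻ᵗ) R / (d + 1)` for every `t`.
-/

open Finset Filter Topology Module MvPolynomial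

namespace Nat

theorem sum_range_succ_choose_succ (n r : ℕ) :
    ∑ i ∈ range (r + 1), (n + 1).choose i =
      ∑ i ∈ range (r + 1), n.choose i + ∑ i ∈ range r, n.choose i := by
  rw [sum_range_succ' _ r, sum_range_succ' (fun i => n.choose i) r]
  simp only [choose_succ_succ', sum_add_distrib, choose_zero_right]
  ring

theorem centralBinom_sq_mul_le (k : ℕ) : centralBinom k ^ 2 * (2 * k + 1) ≤ 16 ^ k := by
  induction k with
  | zero => simp
  | succ k ih =>
    have hrec := succ_mul_centralBinom_succ k
    refine le_of_mul_le_mul_left (a := (k + 1) ^ 2) ?_ (by positivity)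
    calc (k + 1) ^ 2 * (centralBinom (k + 1) ^ 2 * (2 * (k + 1) + 1))
        = 4 * ((2 * k + 1) * (2 * k + 3)) * (centralBinom k ^ 2 * (2 * k + 1)) := by
          rw [← mul_assoc, ← mul_pow, hrec]; ring
      _ ≤ 4 * (4 * (k + 1) ^ 2) * 16 ^ k :=
          Nat.mul_le_mul (Nat.mul_le_mul_left 4 (by nlinarith)) ih
      _ = (k + 1) ^ 2 * 16 ^ (k + 1) := by ring

theorem choose_sq_mul_succ_le_four_pow (n k : ℕ) : n.choose k ^ 2 * (n + 1) ≤ 4 ^ n := by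
  refine (Nat.mul_le_mul_right _ (Nat.pow_le_pow_left (choose_le_middle k n) 2)).trans ?_
  obtain ⟨j, rfl | rfl⟩ := even_or_odd' n
  · have := centralBinom_sq_mul_le j
    rw [show 2 * j / 2 = j by omega, ← centralBinom_eq_two_mul_choose, pow_mul]
    simpa using this
  · have hc : centralBinom (j + 1) = 2 * (2 * j + 1).choose j := by
      rw [centralBinom_eq_two_mul_choose, show 2 * (j + 1) = 2 * j + 1 + 1 by ring,
        choose_succ_succ', choose_symm_half]
      ring
    have := centralBinom_sq_mul_le (j + 1)
    rw [hc] at this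
    rw [show (2 * j + 1) / 2 = j by omega]
    have h16 : (16 : ℕ) ^ (j + 1) = 4 * 4 ^ (2 * j + 1) := by
      rw [show (16 : ℕ) = 4 ^ 2 by rfl, ← pow_mul]; ring
    nlinarith [h16]

end Nat

theorem choose_div_two_pow_le (n k : ℕ) : (n.choose k : ℝ) / 2 ^ n ≤ (√(n + 1))⁻¹ := by
  rw [div_le_iff₀ (by positivity), ← div_eq_inv_mul, le_div_iff₀ (by positivity)]
  refine (pow_le_pow_iff_left₀ (by positivity) (by positivity) two_ne_zero).mp ?_
  rw [mul_pow, Real.sq_sqrt (by positivity), ← pow_mul, mul_comm n 2, pow_mul]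
  exact_mod_cast Nat.choose_sq_mul_succ_le_four_pow n k

theorem tendsto_inv_sqrt_succ_atTop : Tendsto (fun n : ℕ => (√((n : ℝ) + 1))⁻¹) atTop (𝓝 0) :=
  tendsto_inv_atTop_zero.comp <| Real.tendsto_sqrt_atTop.comp <|
    tendsto_atTop_add_const_right _ 1 tendsto_natCast_atTop_atTop

theorem sum_range_choose_div_two_pow_eq (n r : ℕ) :
    (∑ i ∈ range (r + 1), (n.choose i : ℝ)) / 2 ^ n =
      (∑ i ∈ range (r + 1), ((n + 1).choose i : ℝ)) / 2 ^ (n + 1) +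
        (n.choose r : ℝ) / 2 ^ (n + 1) := by
  have h := congrArg (Nat.cast : ℕ → ℝ) (Nat.sum_range_succ_choose_succ n r)
  push_cast at h
  rw [← add_div, h, sum_range_succ, pow_succ]
  field_simp
  ring

theorem tendsto_sum_choose_sub_div_two_pow {R : ℝ} {r : ℕ → ℕ}
    (hlim : Tendsto (fun m => (∑ i ∈ range (r m + 1), (m.choose i : ℝ)) / 2 ^ m) atTop (𝓝 R))
    (t : ℕ) :
    Tendsto (fun m => (∑ i ∈ range (r m + 1), ((m - t).choose i : ℝ)) / 2 ^ (m - t))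
      atTop (𝓝 R) := by
  induction t with
  | zero => simpa using hlim
  | succ t ih =>
    have hsucc : ∀ᶠ m in atTop, m - t = m - (t + 1) + 1 :=
      eventually_ge_atTop (t + 1) |>.mono fun m hm => by omega
    have hsmall : Tendsto (fun m => ((m - (t + 1)).choose (r m) : ℝ) / 2 ^ (m - t))
        atTop (𝓝 0) := by
      refine squeeze_zero' (Eventually.of_forall fun m => by positivity) ?_
        (tendsto_inv_sqrt_succ_atTop.comp (tendsto_sub_atTop_nat (t + 1)))
      filter_upwards [hsucc] with m hm
      rw [hm]
      refine le_trans ?_ (choose_div_two_pow_le _ (r m))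
      gcongr <;> norm_num
    have := ih.add hsmall
    rw [add_zero] at this
    refine this.congr' ?_
    filter_upwards [hsucc] with m hm
    rw [hm, sum_range_choose_div_two_pow_eq (m - (t + 1))]

theorem Submodule.finrank_map_add_finrank_inf_ker {K V W : Type*} [Field K] [AddCommGroup V]
    [Module K V] [AddCommGroup W] [Module K W] [FiniteDimensional K V]
    (φ : V →ₗ[K] W) (D : Submodule K V) :
    finrank K (D.map φ) + finrank K ↥(D ⊓ LinearMap.ker φ) = finrank K D := by
  rw [← LinearMap.range_domRestrict, ← (φ.domRestrict D).finrank_range_add_finrank_ker,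
    LinearMap.ker_domRestrict, ← Submodule.map_comap_subtype, Submodule.finrank_map_subtype_eq]

def blockSum (R : Type*) [CommSemiring R] (d N T : ℕ) : (Fin N → R) →ₗ[R] (Fin T → R) :=
  LinearMap.pi fun b => ∑ j ∈ univ.filter fun j : Fin N => (j : ℕ) / (d + 1) = b, LinearMap.proj j

theorem blockSum_apply {R : Type*} [CommSemiring R] (d N T : ℕ) (w : Fin N → R) (b : Fin T) :
    blockSum R d N T w b = ∑ j ∈ univ.filter fun j : Fin N => (j : ℕ) / (d + 1) = b, w j := by
  simp [blockSum]

namespace RLL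

variable {d : ℕ}

theorem eq_zero_of_dist_le {N : ℕ} {w : Fin N → ZMod 2} (h : RLL d w) {i j : Fin N}
    (hi : w i = 1) (hne : j ≠ i) (hji : (j : ℕ) ≤ i + d) (hij : (i : ℕ) ≤ j + d) : w j = 0 := by
  rcases lt_or_gt_of_ne (Fin.val_ne_of_ne hne) with hlt | hgt
  · by_contra hj
    exact one_ne_zero (h j i (Fin.eq_one_of_ne_zero _ hj) hlt hij ▸ hi).symm
  · exact h i j hi hgt hji

theorem blockSum_apply_eq_one {N T : ℕ} {w : Fin N → ZMod 2} (h : RLL d w) {p : Fin N}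
    (hp : w p = 1) (b : Fin T) (hb : (b : ℕ) = p / (d + 1)) : blockSum (ZMod 2) d N T w b = 1 := by
  rw [blockSum_apply, sum_eq_single_of_mem p (by simp [hb]), hp]
  intro j hj hjp
  simp only [mem_filter, mem_univ, true_and, hb] at hj
  have hj' := Nat.div_add_mod j (d + 1)
  have hp' := Nat.div_add_mod p (d + 1)
  have := Nat.mod_lt j (show 0 < d + 1 by omega)
  have := Nat.mod_lt p (show 0 < d + 1 by omega)
  rw [hj] at hj'
  generalize (d + 1) * (p / (d + 1)) = q at hj' hp'
  exact h.eq_zero_of_dist_le hp hjp (by omega) (by omega)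

theorem finrank_le {N : ℕ} (D : Submodule (ZMod 2) (Fin N → ZMod 2)) (hD : ∀ c ∈ D, RLL d c) :
    (d + 1) * finrank (ZMod 2) D ≤ N + d := by
  set T := (N + d) / (d + 1)
  have hinj : D ⊓ LinearMap.ker (blockSum (ZMod 2) d N T) = ⊥ := by
    refine (Submodule.eq_bot_iff _).mpr fun c ⟨hcD, hc⟩ => funext fun p => ?_
    by_contra hp
    have hpT : (p : ℕ) / (d + 1) < T := by
      refine (Nat.le_div_iff_mul_le (Nat.succ_pos d)).mpr ?_
      have := Nat.div_mul_le_self p (d + 1)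
      change ((p : ℕ) / (d + 1) + 1) * (d + 1) ≤ N + d
      rw [add_mul, one_mul]
      omega
    have := (hD c hcD).blockSum_apply_eq_one (Fin.eq_one_of_ne_zero _ hp) ⟨_, hpT⟩ rfl
    rw [LinearMap.mem_ker.mp hc] at this
    exact zero_ne_one this
  have hrk := Submodule.finrank_map_add_finrank_inf_ker (blockSum (ZMod 2) d N T) D
  rw [hinj, finrank_bot, add_zero] at hrk
  calc (d + 1) * finrank (ZMod 2) D ≤ (d + 1) * T := by
        rw [← hrk]
        gcongr
        simpa using Submodule.finrank_le (D.map (blockSum (ZMod 2) d N T))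
    _ ≤ N + d := Nat.mul_div_le (N + d) (d + 1)

end RLL

theorem bitRepr_succ_of_lt {n s : ℕ} (hs : s < 2 ^ n) :
    bitRepr (n + 1) s = Fin.cons 0 (bitRepr n s) := by
  funext j
  refine Fin.cases ?_ (fun i => ?_) j
  · simp [bitRepr, Nat.testBit_lt_two_pow hs]
  · simp only [bitRepr, Fin.cons_succ, Fin.val_succ]
    congr 3
    omega

theorem bitRepr_succ_add_two_pow {n s : ℕ} (hs : s < 2 ^ n) :
    bitRepr (n + 1) (s + 2 ^ n) = Fin.cons 1 (bitRepr n s) := by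
  funext j
  refine Fin.cases ?_ (fun i => ?_) j
  · simp [bitRepr, add_comm s, Nat.testBit_two_pow_add_eq, Nat.testBit_lt_two_pow hs]
  · simp only [bitRepr, Fin.cons_succ, Fin.val_succ, add_comm s]
    rw [show n + 1 - 1 - (i + 1) = n - 1 - i by omega,
      Nat.testBit_two_pow_add_gt (by omega)]

/-- Since `bitRepr` is most significant bit first, the first half of the coordinates are the
points with `x₀ = 0` and the second half (`upperIdx`) those with `x₀ = 1`. -/
def lowerIdx (n : ℕ) (s : Fin (2 ^ n)) : Fin (2 ^ (n + 1)) :=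
  ⟨s, s.2.trans_le (Nat.pow_le_pow_right two_pos n.le_succ)⟩

def upperIdx (n : ℕ) (s : Fin (2 ^ n)) : Fin (2 ^ (n + 1)) :=
  ⟨s + 2 ^ n, by rw [pow_succ]; omega⟩

theorem lowerIdx_or_upperIdx {n : ℕ} (p : Fin (2 ^ (n + 1))) :
    (∃ s, lowerIdx n s = p) ∨ ∃ s, upperIdx n s = p := by
  have : (p : ℕ) < 2 ^ n * 2 := p.2.trans_eq (pow_succ 2 n)
  rcases lt_or_ge (p : ℕ) (2 ^ n) with hp | hp
  · exact .inl ⟨⟨p, hp⟩, rfl⟩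
  · exact .inr ⟨⟨p - 2 ^ n, by omega⟩, Fin.ext (Nat.sub_add_cancel hp)⟩

noncomputable def lowerHalf (n : ℕ) :
    (Fin (2 ^ (n + 1)) → ZMod 2) →ₗ[ZMod 2] (Fin (2 ^ n) → ZMod 2) :=
  LinearMap.funLeft (ZMod 2) (ZMod 2) (lowerIdx n)

noncomputable def upperHalf (n : ℕ) :
    (Fin (2 ^ (n + 1)) → ZMod 2) →ₗ[ZMod 2] (Fin (2 ^ n) → ZMod 2) :=
  LinearMap.funLeft (ZMod 2) (ZMod 2) (upperIdx n)

theorem eq_zero_of_lowerHalf_eq_zero_of_upperHalf_eq_zero {n : ℕ} {x : Fin (2 ^ (n + 1)) → ZMod 2}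
    (h₀ : lowerHalf n x = 0) (h₁ : upperHalf n x = 0) : x = 0 := by
  funext p
  obtain ⟨s, rfl⟩ | ⟨s, rfl⟩ := lowerIdx_or_upperIdx p
  · exact congrFun h₀ s
  · exact congrFun h₁ s

noncomputable def sumHalves (n : ℕ) :
    (Fin (2 ^ (n + 1)) → ZMod 2) →ₗ[ZMod 2] (Fin (2 ^ n) → ZMod 2) :=
  lowerHalf n + upperHalf n

theorem sumHalves_eq_upperHalf {n : ℕ} {x : Fin (2 ^ (n + 1)) → ZMod 2} (h : lowerHalf n x = 0) :
    sumHalves n x = upperHalf n x := by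
  rw [sumHalves, LinearMap.add_apply, h, zero_add]

theorem ker_lowerHalf_inf_ker_sumHalves (n : ℕ) :
    LinearMap.ker (lowerHalf n) ⊓ LinearMap.ker (sumHalves n) = ⊥ := by
  refine (Submodule.eq_bot_iff _).mpr fun x ⟨h₀, h⟩ => ?_
  replace h₀ : lowerHalf n x = 0 := h₀
  exact eq_zero_of_lowerHalf_eq_zero_of_upperHalf_eq_zero h₀ (sumHalves_eq_upperHalf h₀ ▸ h)

theorem RLL.comp_of_val_eq_add {d n N k : ℕ} {w : Fin N → ZMod 2} (h : RLL d w) (e : Fin n → Fin N)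
    (he : ∀ i, (e i : ℕ) = i + k) : RLL d (w ∘ e) := by
  intro i j hi hij hji
  have := he i
  have := he j
  exact h (e i) (e j) hi (by omega) (by omega)

theorem RLL.comp_lowerIdx {d n : ℕ} {x : Fin (2 ^ (n + 1)) → ZMod 2} (h : RLL d x) :
    RLL d (x ∘ lowerIdx n) :=
  h.comp_of_val_eq_add (k := 0) _ fun _ => rfl

theorem RLL.comp_upperIdx {d n : ℕ} {x : Fin (2 ^ (n + 1)) → ZMod 2} (h : RLL d x) :
    RLL d (x ∘ upperIdx n) :=
  h.comp_of_val_eq_add _ fun _ => rfl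

noncomputable def substFirst {R : Type*} [CommRing R] (n : ℕ) (b : R) :
    MvPolynomial (Fin (n + 1)) R →ₐ[R] MvPolynomial (Fin n) R :=
  aeval (Fin.cons (C b) X)

section substFirst

variable {R : Type*} [CommRing R] {n : ℕ}

theorem aeval_substFirst (x : Fin n → R) (b : R) (f : MvPolynomial (Fin (n + 1)) R) :
    aeval x (substFirst n b f) = aeval (Fin.cons b x) f := by
  rw [substFirst, comp_aeval_apply]
  congr
  funext i
  refine Fin.cases ?_ (fun i => ?_) i <;> simp

theorem substFirst_eq_eval (b : R) (f : MvPolynomial (Fin (n + 1)) R) :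
    substFirst n b f = (finSuccEquiv R n f).eval (C b) := by
  suffices substFirst n b = ((Polynomial.aeval (C b)).restrictScalars R).comp
      (finSuccEquiv R n).toAlgHom by
    rw [this]; simp [Polynomial.coe_aeval_eq_eval]
  refine algHom_ext fun i => Fin.cases ?_ (fun i => ?_) i
  · simp [substFirst, finSuccEquiv_X_zero]
  · simp [substFirst, finSuccEquiv_X_succ]

theorem totalDegree_substFirst_zero_le (f : MvPolynomial (Fin (n + 1)) R) :
    (substFirst n 0 f).totalDegree ≤ f.totalDegree := by
  rw [substFirst_eq_eval, map_zero, ← Polynomial.coeff_zero_eq_eval_zero]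
  by_cases h : (finSuccEquiv R n f).coeff 0 = 0
  · simp [h]
  · exact (totalDegree_coeff_finSuccEquiv_add_le f 0 h).trans' le_self_add

variable [CharP R 2]

theorem totalDegree_substFirst_zero_add_substFirst_one_le {r : ℕ}
    {f : MvPolynomial (Fin (n + 1)) R} (hf : f.totalDegree ≤ r + 1) :
    (substFirst n 0 f + substFirst n 1 f).totalDegree ≤ r := by
  have hsum : substFirst n 0 f + substFirst n 1 f =
      ∑ i ∈ range (finSuccEquiv R n f).natDegree, (finSuccEquiv R n f).coeff (i + 1) := by
    rw [substFirst_eq_eval, substFirst_eq_eval, map_zero, map_one,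
      ← Polynomial.coeff_zero_eq_eval_zero, Polynomial.eval_eq_sum_range, sum_range_succ']
    simp only [one_pow, mul_one, pow_zero]
    rw [add_comm, add_assoc, CharTwo.add_self_eq_zero, add_zero]
  rw [hsum]
  refine (totalDegree_finsetSum _ _).trans (Finset.sup_le fun i _ => ?_)
  by_cases h : (finSuccEquiv R n f).coeff (i + 1) = 0
  · simp [h]
  · have := totalDegree_coeff_finSuccEquiv_add_le f (i + 1) h
    omega

theorem substFirst_zero_add_substFirst_one_of_totalDegree_eq_zero
    {f : MvPolynomial (Fin (n + 1)) R} (hf : f.totalDegree = 0) :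
    substFirst n 0 f + substFirst n 1 f = 0 := by
  rw [totalDegree_eq_zero_iff_eq_C.mp hf]
  simp only [substFirst, aeval_C, CharTwo.add_self_eq_zero]

end substFirst

theorem evalRM_apply (m : ℕ) (f : MvPolynomial (Fin m) (ZMod 2)) (s : Fin (2 ^ m)) :
    evalRM m f s = aeval (bitRepr m s) f :=
  rfl

theorem lowerHalf_evalRM (n : ℕ) (f : MvPolynomial (Fin (n + 1)) (ZMod 2)) :
    lowerHalf n (evalRM (n + 1) f) = evalRM n (substFirst n 0 f) := by
  funext s
  rw [evalRM_apply, aeval_substFirst, ← bitRepr_succ_of_lt s.2]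
  rfl

theorem upperHalf_evalRM (n : ℕ) (f : MvPolynomial (Fin (n + 1)) (ZMod 2)) :
    upperHalf n (evalRM (n + 1) f) = evalRM n (substFirst n 1 f) := by
  funext s
  rw [evalRM_apply, aeval_substFirst, ← bitRepr_succ_add_two_pow s.2]
  rfl

theorem sumHalves_evalRM (n : ℕ) (f : MvPolynomial (Fin (n + 1)) (ZMod 2)) :
    sumHalves n (evalRM (n + 1) f) = evalRM n (substFirst n 0 f + substFirst n 1 f) := by
  rw [sumHalves, LinearMap.add_apply, lowerHalf_evalRM, upperHalf_evalRM, map_add]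

theorem map_lowerHalf_RM_le (n r : ℕ) : (RM (n + 1) r).map (lowerHalf n) ≤ RM n r := by
  rintro _ ⟨_, ⟨f, hf, rfl⟩, rfl⟩
  refine ⟨substFirst n 0 f, ?_, (lowerHalf_evalRM n f).symm⟩
  exact (mem_restrictTotalDegree _ _ _).mpr <|
    (totalDegree_substFirst_zero_le f).trans ((mem_restrictTotalDegree _ _ _).mp hf)

theorem map_sumHalves_RM_succ_le (n r : ℕ) : (RM (n + 1) (r + 1)).map (sumHalves n) ≤ RM n r := by
  rintro _ ⟨_, ⟨f, hf, rfl⟩, rfl⟩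
  refine ⟨substFirst n 0 f + substFirst n 1 f, ?_, (sumHalves_evalRM n f).symm⟩
  exact (mem_restrictTotalDegree _ _ _).mpr <|
    totalDegree_substFirst_zero_add_substFirst_one_le ((mem_restrictTotalDegree _ _ _).mp hf)

theorem map_sumHalves_RM_zero (n : ℕ) : (RM (n + 1) 0).map (sumHalves n) = ⊥ := by
  refine (Submodule.eq_bot_iff _).mpr ?_
  rintro _ ⟨_, ⟨f, hf, rfl⟩, rfl⟩
  rw [sumHalves_evalRM, substFirst_zero_add_substFirst_one_of_totalDegree_eq_zero
    (Nat.le_zero.mp ((mem_restrictTotalDegree _ _ _).mp hf)), map_zero]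

theorem RLL.finrank_le_of_le_RM {d t a r : ℕ} {D : Submodule (ZMod 2) (Fin (2 ^ (t + a)) → ZMod 2)}
    (hD : D ≤ RM (t + a) r) (hRLL : ∀ c ∈ D, RLL d c) :
    (d + 1) * finrank (ZMod 2) D ≤ (2 ^ t + d) * ∑ i ∈ range (r + 1), a.choose i := by
  induction a generalizing r with
  | zero => simpa [sum_range_succ'] using RLL.finrank_le D hRLL
  | succ a ih =>
    set K := D ⊓ LinearMap.ker (lowerHalf (t + a))
    have hsplit : finrank (ZMod 2) D =
        finrank (ZMod 2) (D.map (lowerHalf (t + a))) + finrank (ZMod 2) K :=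
      (Submodule.finrank_map_add_finrank_inf_ker (lowerHalf (t + a)) D).symm
    have hK : finrank (ZMod 2) (K.map (sumHalves (t + a))) = finrank (ZMod 2) K := by
      have hinj : K ⊓ LinearMap.ker (sumHalves (t + a)) = ⊥ :=
        eq_bot_iff.mpr <| (inf_le_inf_right _ inf_le_right).trans
          (ker_lowerHalf_inf_ker_sumHalves (t + a)).le
      have := Submodule.finrank_map_add_finrank_inf_ker (sumHalves (t + a)) K
      rwa [hinj, finrank_bot, add_zero] at this
    have h₀ := ih ((Submodule.map_mono hD).trans (map_lowerHalf_RM_le (t + a) r))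
      (by rintro _ ⟨c, hc, rfl⟩; exact (hRLL c hc).comp_lowerIdx)
    have h₁ : (d + 1) * finrank (ZMod 2) (K.map (sumHalves (t + a))) ≤
        (2 ^ t + d) * ∑ i ∈ range r, a.choose i := by
      have hRLL₁ : ∀ c ∈ K.map (sumHalves (t + a)), RLL d c := by
        rintro _ ⟨c, ⟨hcD, hc⟩, rfl⟩
        rw [sumHalves_eq_upperHalf hc]
        exact (hRLL c hcD).comp_upperIdx
      cases r with
      | zero =>
        rw [eq_bot_iff.mpr ((Submodule.map_mono (inf_le_left.trans hD)).trans
          (map_sumHalves_RM_zero (t + a)).le)]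
        simp
      | succ r =>
        exact ih ((Submodule.map_mono (inf_le_left.trans hD)).trans
          (map_sumHalves_RM_succ_le (t + a) r)) hRLL₁
    rw [Nat.sum_range_succ_choose_succ, hsplit, ← hK, mul_add, mul_add]
    exact add_le_add h₀ h₁

theorem sSup_finrank_RLL_le {d r t m : ℕ} (htm : t ≤ m) :
    (d + 1) * sSup {k : ℕ | ∃ D : Submodule (ZMod 2) (Fin (2 ^ m) → ZMod 2),
        D ≤ RM m r ∧ (∀ c ∈ D, RLL d c) ∧ finrank (ZMod 2) D = k}
      ≤ (2 ^ t + d) * ∑ i ∈ range (r + 1), (m - t).choose i := by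
  obtain ⟨a, rfl⟩ := Nat.exists_eq_add_of_le htm
  rw [Nat.add_sub_cancel_left, mul_comm, ← Nat.le_div_iff_mul_le (Nat.succ_pos d)]
  refine csSup_le ⟨0, ⊥, bot_le, ?_, finrank_bot _ _⟩ ?_
  · rintro c hc i j hi
    simp [(Submodule.mem_bot _).mp hc] at hi
  · rintro _ ⟨D, hD, hRLL, rfl⟩
    rw [Nat.le_div_iff_mul_le (Nat.succ_pos d), mul_comm]
    exact RLL.finrank_le_of_le_RM hD hRLL

theorem sSup_finrank_RLL_div_two_pow_le {d r t m : ℕ} (htm : t ≤ m) :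
    ((sSup {k : ℕ | ∃ D : Submodule (ZMod 2) (Fin (2 ^ m) → ZMod 2),
        D ≤ RM m r ∧ (∀ c ∈ D, RLL d c) ∧ finrank (ZMod 2) D = k} : ℕ) : ℝ) / 2 ^ m
      ≤ (1 + d * (2⁻¹ : ℝ) ^ t) / (d + 1) *
        ((∑ i ∈ range (r + 1), ((m - t).choose i : ℝ)) / 2 ^ (m - t)) := by
  have h := sSup_finrank_RLL_le (d := d) (r := r) htm
  have h2 : (2 : ℝ) ^ m = 2 ^ t * 2 ^ (m - t) := by rw [← pow_add, Nat.add_sub_cancel' htm]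
  rw [h2, inv_pow, div_le_iff₀ (by positivity)]
  field_simp
  rw [mul_comm]
  exact_mod_cast h

theorem stmt3_general (R : ℝ) (d : ℕ) (r : ℕ → ℕ)
    (hlim : Filter.Tendsto
      (fun m : ℕ => (∑ i ∈ Finset.range (r m + 1), (m.choose i : ℝ)) / 2 ^ m)
      Filter.atTop (nhds R)) :
    Filter.limsup
      (fun m : ℕ =>
        ((sSup {k : ℕ | ∃ D : Submodule (ZMod 2) (Fin (2 ^ m) → ZMod 2),
            D ≤ RM m (r m) ∧ (∀ c ∈ D, RLL d c) ∧
            Module.finrank (ZMod 2) D = k} : ℕ) : ℝ) / 2 ^ m)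
      Filter.atTop ≤ R / (d + 1) := by
  set c : ℕ → ℝ := fun t => (1 + d * (2⁻¹ : ℝ) ^ t) / (d + 1)
  have hc : Tendsto (fun t => c t * R) atTop (𝓝 (R / (d + 1))) := by
    have h := (((tendsto_pow_atTop_nhds_zero_of_lt_one (by norm_num) (by norm_num :
      (2⁻¹ : ℝ) < 1)).const_mul (d : ℝ)).const_add 1).div_const ((d : ℝ) + 1) |>.mul_const R
    convert h using 2
    ring
  refine ge_of_tendsto' hc fun t => ?_
  have hg := (tendsto_sum_choose_sub_div_two_pow hlim t).const_mul (c t)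
  refine (limsup_le_limsup ?_ (isCoboundedUnder_le_of_le atTop fun _ => by positivity)
    hg.isBoundedUnder_le).trans hg.limsup_eq.le
  filter_upwards [eventually_ge_atTop t] with m htm
  exact sSup_finrank_RLL_div_two_pow_le htm

/-- If C(m,≤r_m)/2^m → R ∈ (0,1) and L_m is the maximum dimension of a
linear subspace of RM(m,r_m) all of whose elements satisfy the (d,∞)-RLL constraint
(lexicographic ordering), then limsup L_m/2^m ≤ R/(d+1). -/
theorem stmt3 (R : ℝ) (hR : R ∈ Set.Ioo (0 : ℝ) 1) (d : ℕ) (hd : 1 ≤ d) (r : ℕ → ℕ)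
    (hlim : Filter.Tendsto
      (fun m : ℕ => (∑ i ∈ Finset.range (r m + 1), (m.choose i : ℝ)) / 2 ^ m)
      Filter.atTop (nhds R)) :
    Filter.limsup
      (fun m : ℕ =>
        ((sSup {k : ℕ | ∃ D : Submodule (ZMod 2) (Fin (2 ^ m) → ZMod 2),
            D ≤ RM m (r m) ∧ (∀ c ∈ D, RLL d c) ∧
            Module.finrank (ZMod 2) D = k} : ℕ) : ℝ) / 2 ^ m)
      Filter.atTop ≤ R / (d + 1) :=
  stmt3_general R d r hlim
end

section
/- Let m ≥ 1 and 0 ≤ r ≤ m be integers. In F₂^{2^m}, the F₂-linear span of the set {Eval(∏_{i∈S} x_i) : S ⊆ {1,…,m}, |S| ≥ r+1} of evaluation vectors of monomials of degree at least r+1 equals the F₂-linear span of the set {e_b : b ∈ F₂^m, wt(b) ≥ r+1} of standard basis vectors, where e_b is the vector with a 1 in the coordinate indexed by the evaluation point b and 0s elsewhere, and wt(b) is the Hamming weight of b. -/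
/-- Hamming weight of a point b ∈ F₂^m. -/
def wtF {m : ℕ} (b : Fin m → ZMod 2) : ℕ := (Finset.univ.filter fun j => b j = 1).card

/-! Over `F₂` the evaluation vector of `∏_{i∈S} xᵢ` is the sum of the `e_b` over the points `b`
with `S ⊆ ones b`, and conversely `e_b` is the evaluation of
`∏ᵢ (xᵢ + bᵢ + 1) = ∑_{T ⊇ ones b} ∏_{i∈T} xᵢ`. Both expansions only pass from a set of
coordinates to its supersets, so the two spans agree for every up-closed family of sets `ones b`,
in particular for the sets of size at least `r + 1`. -/

open Finset MvPolynomial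

def ones {ι : Type*} [Fintype ι] (b : ι → ZMod 2) : Finset ι := univ.filter fun j => b j = 1

section PointIndicator

variable {ι : Type*} [Fintype ι] [DecidableEq ι]

lemma prod_eq_ite_subset_ones (z : ι → ZMod 2) (S : Finset ι) :
    ∏ i ∈ S, z i = if S ⊆ ones z then 1 else 0 := by
  have hboole : ∀ a : ZMod 2, a = if a = 1 then 1 else 0 := by decide
  rw [prod_congr rfl fun i _ => hboole (z i), prod_boole]
  simp [ones, subset_iff]

lemma ite_eq_eq_sum_prod (z s : ι → ZMod 2) :
    (if z = s then 1 else 0 : ZMod 2) = ∑ T with ones s ⊆ T, ∏ i ∈ T, z i := by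
  have hfactor : ∀ a b : ZMod 2, a + (b + 1) = if a = b then 1 else 0 := by decide
  have hcompl (T : Finset ι) : ∏ i ∈ Tᶜ, (s i + 1) = if ones s ⊆ T then 1 else 0 := by
    have hboole : ∀ b : ZMod 2, b + 1 = if b ≠ 1 then 1 else 0 := by decide
    rw [prod_congr rfl fun i _ => hboole (s i), prod_boole]
    simp [ones, subset_iff, not_imp_not]
  calc (if z = s then 1 else 0 : ZMod 2) = ∏ i, (z i + (s i + 1)) := by
        simp only [hfactor, Fintype.prod_boole, _root_.funext_iff]
    _ = ∑ T, (∏ i ∈ T, z i) * ∏ i ∈ Tᶜ, (s i + 1) := Fintype.prod_add _ _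
    _ = ∑ T with ones s ⊆ T, ∏ i ∈ T, z i := by
        simp only [hcompl, mul_ite, mul_one, mul_zero, sum_ite, sum_const_zero, add_zero]

end PointIndicator

lemma bitRepr_injective (m : ℕ) : Function.Injective fun s : Fin (2 ^ m) => bitRepr m s := by
  intro s t h
  apply Fin.ext
  apply Nat.eq_of_testBit_eq
  intro i
  by_cases hi : i < m
  · have hbit := congrFun h ⟨m - 1 - i, by omega⟩
    simp only [bitRepr, Nat.sub_sub_self (by omega : i ≤ m - 1)] at hbit
    by_cases hs : Nat.testBit s i <;> by_cases ht : Nat.testBit t i <;> simp_all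
  · have hpow : 2 ^ m ≤ 2 ^ i := Nat.pow_le_pow_right two_pos (by omega)
    rw [Nat.testBit_lt_two_pow (s.2.trans_le hpow), Nat.testBit_lt_two_pow (t.2.trans_le hpow)]

lemma evalRM_prod_X_apply (m : ℕ) (S : Finset (Fin m)) (s : Fin (2 ^ m)) :
    evalRM m (∏ i ∈ S, X i) s = ∏ i ∈ S, bitRepr m s i := by
  simp [evalRM]

lemma evalRM_prod_X_eq_sum_single (m : ℕ) (S : Finset (Fin m)) :
    evalRM m (∏ i ∈ S, X i) =
      ∑ t ∈ univ.filter fun t : Fin (2 ^ m) => S ⊆ ones (bitRepr m t), Pi.single t 1 := by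
  funext u
  simp [evalRM_prod_X_apply, prod_eq_ite_subset_ones, Pi.single_apply]

lemma single_eq_sum_evalRM_prod_X (m : ℕ) (s : Fin (2 ^ m)) :
    (Pi.single s 1 : Fin (2 ^ m) → ZMod 2) =
      ∑ T with ones (bitRepr m s) ⊆ T, evalRM m (∏ i ∈ T, X i) := by
  funext u
  simp only [Finset.sum_apply, evalRM_prod_X_apply, Pi.single_apply,
    ← (bitRepr_injective m).eq_iff]
  exact ite_eq_eq_sum_prod _ _

theorem span_evalRM_prod_X_eq_span_single (m : ℕ) (𝒜 : Set (Finset (Fin m)))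
    (h𝒜 : IsUpperSet 𝒜) :
    Submodule.span (ZMod 2) {c | ∃ S ∈ 𝒜, c = evalRM m (∏ i ∈ S, X i)} =
      Submodule.span (ZMod 2)
        {c | ∃ s : Fin (2 ^ m), ones (bitRepr m s) ∈ 𝒜 ∧ c = Pi.single s 1} := by
  apply le_antisymm <;> rw [Submodule.span_le]
  · rintro _ ⟨S, hS, rfl⟩
    rw [SetLike.mem_coe, evalRM_prod_X_eq_sum_single]
    exact Submodule.sum_mem _ fun t ht =>
      Submodule.subset_span ⟨t, h𝒜 (mem_filter.1 ht).2 hS, rfl⟩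
  · rintro _ ⟨s, hs, rfl⟩
    rw [SetLike.mem_coe, single_eq_sum_evalRM_prod_X]
    exact Submodule.sum_mem _ fun T hT =>
      Submodule.subset_span ⟨T, h𝒜 (mem_filter.1 hT).2 hs, rfl⟩

theorem stmt8_general (m r : ℕ) :
    Submodule.span (ZMod 2)
        {c : Fin (2 ^ m) → ZMod 2 | ∃ S : Finset (Fin m), r + 1 ≤ S.card ∧
          c = evalRM m (∏ i ∈ S, MvPolynomial.X i)} =
      Submodule.span (ZMod 2)
        {c : Fin (2 ^ m) → ZMod 2 | ∃ s : Fin (2 ^ m), r + 1 ≤ wtF (bitRepr m (s : ℕ)) ∧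
          c = Pi.single s 1} :=
  span_evalRM_prod_X_eq_span_single m {S | r + 1 ≤ S.card}
    fun _ _ hST hS => hS.trans (card_le_card hST)

/-- In F₂^{2^m}, the span of the evaluation vectors of the monomials
∏_{i∈S} x_i with |S| ≥ r+1 equals the span of the standard basis vectors e_b indexed by
evaluation points b of Hamming weight ≥ r+1. -/
theorem stmt8 (m r : ℕ) (hm : 1 ≤ m) (hr : r ≤ m) :
    Submodule.span (ZMod 2)
        {c : Fin (2 ^ m) → ZMod 2 | ∃ S : Finset (Fin m), r + 1 ≤ S.card ∧
          c = evalRM m (∏ i ∈ S, MvPolynomial.X i)} =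
      Submodule.span (ZMod 2)
        {c : Fin (2 ^ m) → ZMod 2 | ∃ s : Fin (2 ^ m), r + 1 ≤ wtF (bitRepr m (s : ℕ)) ∧
          c = Pi.single s 1} :=
  stmt8_general m r
end
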